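/- arXiv:1701.07117 — 7 statements merged into one kernel-verified Lean document; each statement's English description precedes it below -/
import Mathlib

section
/- Let A be a ring, X a right A-module, and B a right ideal of A such that X is injective with respect to the module B_A. Then X is injective with respect to the module (AB)_A, where AB is the two-sided ideal of A generated by the right ideal B. Moreover, if the ideal AB contains a finite subset C with zero right annihilator r(C) = 0, then the module X is injective. -/
open MulOpposite

open MulOpposite

/-- The right annihilator `r(x) = {a : A | x·a = 0}` of an element `x` of a right `A`-module `X`,
as a right ideal of `A`. -/
def rightAnn (A : Type*) [Ring A] {X : Type*} [AddCommGroup X] [Module Aᵐᵒᵖ X]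
    (x : X) : Submodule Aᵐᵒᵖ A where
  carrier := {a : A | op a • x = 0}
  add_mem' := by
    intro a b ha hb
    simp only [Set.mem_setOf_eq] at *
    rw [op_add, add_smul, ha, hb, add_zero]
  zero_mem' := by simp
  smul_mem' := by
    intro c a ha
    simp only [Set.mem_setOf_eq] at *
    have h1 : c • a = a * c.unop := rfl
    rw [h1]
    have h2 : op (a * c.unop) = c * op a := by
      simp [MulOpposite.op_mul]
    rw [h2, mul_smul, ha, smul_zero]

/-- A right ideal `B` of `A` is essential if it has non-zero intersection with every
non-zero right ideal of `A`. -/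
def IsEssentialRightIdeal (A : Type*) [Ring A] (B : Submodule Aᵐᵒᵖ A) : Prop :=
  ∀ C : Submodule Aᵐᵒᵖ A, C ≠ ⊥ → B ⊓ C ≠ ⊥

/-- A right `A`-module `X` is non-singular if its singular submodule is zero, i.e. the only
element of `X` whose right annihilator is an essential right ideal of `A` is `0`. -/
def IsNonsingularMod (A : Type*) [Ring A] (X : Type*) [AddCommGroup X] [Module Aᵐᵒᵖ X] : Prop :=
  ∀ x : X, IsEssentialRightIdeal A (rightAnn A x) → x = 0

/-- The Goldie radical (second singular submodule) `G(X)` of a right `A`-module `X`: the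
intersection of all submodules `Y ⊆ X` such that `X/Y` is non-singular. -/
def goldieRadical (A : Type*) [Ring A] (X : Type*) [AddCommGroup X] [Module Aᵐᵒᵖ X] :
    Submodule Aᵐᵒᵖ X :=
  sInf {Y : Submodule Aᵐᵒᵖ X | IsNonsingularMod A (X ⧸ Y)}

/-- A module `X` is injective with respect to a module `Y` (`Y`-injective) if every homomorphism
from a submodule of `Y` to `X` extends to a homomorphism `Y → X`. -/
def IsInjectiveWrt (R : Type*) [Ring R] (X : Type*) [AddCommGroup X] [Module R X]
    (Y : Type*) [AddCommGroup Y] [Module R Y] : Prop :=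
  ∀ (Y₁ : Submodule R Y) (f : Y₁ →ₗ[R] X), ∃ g : Y →ₗ[R] X, ∀ y : Y₁, g y = f y

/-- A ring `A` is right strongly semiprime if every two-sided ideal of `A` which is essential
as a right ideal contains a finite subset with zero right annihilator. -/
def IsRightStronglySemiprime (A : Type*) [Ring A] : Prop :=
  ∀ T : TwoSidedIdeal A,
    (∀ C : Submodule Aᵐᵒᵖ A, C ≠ ⊥ → ∃ x ∈ C, x ≠ 0 ∧ x ∈ T) →
    ∃ K : Finset A, (K : Set A) ⊆ (T : Set A) ∧ ∀ a : A, (∀ k ∈ K, k * a = 0) → a = 0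

/-!
Left multiplication by `a` maps `B` onto the right ideal `aB`, so `X` is `aB`-injective for every
`a`, and `AB = ∑ₐ aB`. By Zorn's lemma relative injectivity passes to sums of submodules: a
maximal partial extension of a homomorphism can be glued with an extension over each summand, so
it already contains every summand. If moreover `C ⊆ AB` is finite with `r(C) = 0`, then
`a ↦ (c a)_{c ∈ C}` embeds `A_A` into `(AB)^C`, so `X` is `A_A`-injective, hence injective by
Baer's criterion.
-/

namespace IsInjectiveWrt

variable {R : Type*} [Ring R] {X : Type*} [AddCommGroup X] [Module R X]
  {Y Y' : Type*} [AddCommGroup Y] [Module R Y] [AddCommGroup Y'] [Module R Y']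

theorem of_surjective (h : IsInjectiveWrt R X Y) (π : Y →ₗ[R] Y')
    (hπ : Function.Surjective π) : IsInjectiveWrt R X Y' := by
  intro Z f
  obtain ⟨g, hg⟩ := h (Z.comap π) (f ∘ₗ π.restrict fun _ hy => hy)
  have hker : LinearMap.ker π ≤ LinearMap.ker g := fun k hk => by
    have hkZ : k ∈ Z.comap π := by simp_all [Submodule.mem_comap]
    have h0 : π.restrict (q := Z) (fun _ hy => hy) ⟨k, hkZ⟩ = 0 := Subtype.ext hk
    rw [LinearMap.mem_ker, hg ⟨k, hkZ⟩, LinearMap.comp_apply, h0, map_zero]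
  refine ⟨(LinearMap.ker π).liftQ g hker ∘ₗ (π.quotKerEquivOfSurjective hπ).symm.toLinearMap,
    fun z => ?_⟩
  obtain ⟨y, hy⟩ := hπ z
  have hyZ : y ∈ Z.comap π := by simp [Submodule.mem_comap, hy]
  have hmk : (π.quotKerEquivOfSurjective hπ).symm z = Submodule.Quotient.mk y := by
    rw [LinearEquiv.symm_apply_eq, LinearMap.quotKerEquivOfSurjective_apply_mk, hy]
  simp only [LinearMap.comp_apply, LinearEquiv.coe_coe, hmk, Submodule.liftQ_apply, hg ⟨y, hyZ⟩]
  exact congrArg f (Subtype.ext hy)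

theorem of_injective (h : IsInjectiveWrt R X Y) (ι : Y' →ₗ[R] Y)
    (hι : Function.Injective ι) : IsInjectiveWrt R X Y' := by
  intro Z f
  let e := Submodule.equivMapOfInjective ι hι Z
  obtain ⟨g, hg⟩ := h (Z.map ι) (f ∘ₗ e.symm.toLinearMap)
  refine ⟨g ∘ₗ ι, fun z => ?_⟩
  simpa [e] using hg (e z)

theorem map {N : Submodule R Y} (h : IsInjectiveWrt R X ↥N) (φ : Y →ₗ[R] Y') :
    IsInjectiveWrt R X ↥(N.map φ) :=
  h.of_surjective (φ.submoduleMap N) (φ.submoduleMap_surjective N)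

theorem of_iSup_eq_top {ι : Sort*} {M : ι → Submodule R Y} (hM : ⨆ i, M i = ⊤)
    (h : ∀ i, IsInjectiveWrt R X ↥(M i)) : IsInjectiveWrt R X Y := by
  intro Y₁ f
  have : Fact (Function.Injective Y₁.subtype) := ⟨Y₁.injective_subtype⟩
  let E := Module.Baer.extensionOfMax Y₁.subtype f
  have hle : ∀ i, M i ≤ E.domain := fun i => by
    let D : Submodule R ↥(M i) := E.domain.comap (M i).subtype
    let j : D →ₗ[R] E.domain :=
      LinearMap.codRestrict E.domain ((M i).subtype ∘ₗ D.subtype) fun d => d.2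
    obtain ⟨g, hg⟩ := h i D (E.toLinearPMap.toFun ∘ₗ j)
    let G : Y →ₗ.[R] X := ⟨M i, g⟩
    have compat : ∀ (x : E.domain) (y : G.domain), (x : Y) = y → E.toLinearPMap x = G y :=
      fun x y hxy => by
        have hyD : y ∈ D := show (y : Y) ∈ E.domain from hxy ▸ x.2
        rw [show x = j ⟨y, hyD⟩ from Subtype.ext hxy]
        exact (hg ⟨y, hyD⟩).symm
    have hEG := E.toLinearPMap.left_le_sup G compat
    let E' : Module.Baer.ExtensionOf Y₁.subtype f :=
      { toLinearPMap := E.toLinearPMap.sup G compat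
        le := E.le.trans le_sup_left
        is_extension := fun m => (E.is_extension m).trans (hEG.2 rfl) }
    have hmax := Module.Baer.extensionOfMax_is_max Y₁.subtype f E' hEG
    exact le_sup_right.trans (congrArg (·.domain) hmax).le
  have htop : E.domain = ⊤ := eq_top_iff.mpr (hM ▸ iSup_le hle)
  exact ⟨E.toLinearPMap.toFun ∘ₗ (LinearEquiv.ofTop _ htop).symm.toLinearMap,
    fun y => (E.is_extension y).symm⟩

theorem iSup {ι : Sort*} {M : ι → Submodule R Y} (h : ∀ i, IsInjectiveWrt R X ↥(M i)) :
    IsInjectiveWrt R X ↥(⨆ i, M i) := by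
  refine of_iSup_eq_top (M := fun i => LinearMap.range (Submodule.inclusion (le_iSup M i))) ?_
    fun i => (h i).of_surjective _ (LinearMap.surjective_rangeRestrict _)
  apply Submodule.map_injective_of_injective (⨆ i, M i).injective_subtype
  simp only [Submodule.map_iSup, Submodule.map_subtype_range_inclusion, Submodule.map_top,
    Submodule.range_subtype]

theorem pi {ι : Type*} [Finite ι] (h : IsInjectiveWrt R X Y) : IsInjectiveWrt R X (ι → Y) := by
  classical
  exact of_iSup_eq_top (LinearMap.iSup_range_single R fun _ : ι => Y) fun i =>
    h.of_surjective _ (LinearMap.single R (fun _ => Y) i).surjective_rangeRestrict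

end IsInjectiveWrt

theorem Module.injective_of_isInjectiveWrt_self {R : Type*} [Ring R] {X : Type*}
    [AddCommGroup X] [Module R X] (h : IsInjectiveWrt R X R) : Module.Injective R X :=
  Module.Baer.injective fun I g => by
    obtain ⟨g', hg'⟩ := h I g
    exact ⟨g', fun x hx => hg' ⟨x, hx⟩⟩

section RightIdeal

variable {A : Type*} [Ring A]

theorem mem_twoSidedIdealSpan_iff_mem_iSup_map_mulLeft (B : Submodule Aᵐᵒᵖ A) {x : A} :
    x ∈ TwoSidedIdeal.span (B : Set A) ↔ x ∈ ⨆ a : A, B.map (LinearMap.mulLeft Aᵐᵒᵖ a) := by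
  set S := ⨆ a : A, B.map (LinearMap.mulLeft Aᵐᵒᵖ a)
  constructor
  · intro hx
    have hmul : ∀ {y z : A}, z ∈ S → y * z ∈ S := fun {y z} hz => by
      induction hz using Submodule.iSup_induction' with
      | mem a z hz =>
        obtain ⟨b, hb, rfl⟩ := hz
        exact Submodule.mem_iSup_of_mem (y * a) ⟨b, hb, mul_assoc y a b⟩
      | zero => simp
      | add u v _ _ hu hv => rw [mul_add]; exact S.add_mem hu hv
    let T : TwoSidedIdeal A := .mk' S S.zero_mem S.add_mem S.neg_mem hmul
      fun {y z} h => S.smul_mem (op z) h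
    have hBT : (B : Set A) ⊆ T := fun b hb => by
      rw [SetLike.mem_coe, TwoSidedIdeal.mem_mk']
      exact Submodule.mem_iSup_of_mem 1 ⟨b, hb, one_mul b⟩
    simpa [T] using TwoSidedIdeal.mem_span_iff.mp hx T hBT
  · intro hx
    induction hx using Submodule.iSup_induction' with
    | mem a z hz =>
      obtain ⟨b, hb, rfl⟩ := hz
      exact TwoSidedIdeal.mul_mem_left _ a b (TwoSidedIdeal.subset_span hb)
    | zero => exact zero_mem _
    | add u v _ _ hu hv => exact add_mem hu hv

variable {X : Type*} [AddCommGroup X] [Module Aᵐᵒᵖ X]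

theorem IsInjectiveWrt.injective_of_rightAnnihilator_eq_bot {I : Submodule Aᵐᵒᵖ A}
    (hX : IsInjectiveWrt Aᵐᵒᵖ X ↥I) (C : Finset A) (hCI : (C : Set A) ⊆ I)
    (hC : ∀ a : A, (∀ c ∈ C, c * a = 0) → a = 0) : Module.Injective Aᵐᵒᵖ X := by
  let φ : A →ₗ[Aᵐᵒᵖ] (C → I) := LinearMap.pi fun c =>
    (LinearMap.mulLeft Aᵐᵒᵖ c.1).codRestrict I fun a => I.smul_mem (op a) (hCI c.2)
  have hφ : Function.Injective φ := by
    refine (injective_iff_map_eq_zero φ).mpr fun a ha => hC a fun c hc => ?_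
    exact congrArg Subtype.val (congrFun ha ⟨c, hc⟩)
  have hA : IsInjectiveWrt Aᵐᵒᵖ X A := hX.pi.of_injective φ hφ
  exact Module.injective_of_isInjectiveWrt_self <|
    hA.of_surjective _ (MulOpposite.opLinearEquiv Aᵐᵒᵖ).surjective

end RightIdeal

/-- If a right `A`-module `X` is injective with respect to a right ideal `B`,
then `X` is injective with respect to the two-sided ideal `AB` generated by `B`; moreover, if
`AB` contains a finite subset `C` with zero right annihilator, then `X` is injective. -/
theorem stmt0 (A : Type u) [Ring A] (X : Type v) [AddCommGroup X] [Module Aᵐᵒᵖ X]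
    (B : Submodule Aᵐᵒᵖ A) (hB : IsInjectiveWrt Aᵐᵒᵖ X ↥B)
    (AB : Submodule Aᵐᵒᵖ A)
    (hAB : ∀ x : A, x ∈ AB ↔ x ∈ TwoSidedIdeal.span (B : Set A)) :
    IsInjectiveWrt Aᵐᵒᵖ X ↥AB ∧
      ((∃ C : Finset A, (C : Set A) ⊆ (AB : Set A) ∧
          ∀ a : A, (∀ c ∈ C, c * a = 0) → a = 0) →
        Module.Injective Aᵐᵒᵖ X) := by
  have hAB' : AB = ⨆ a : A, B.map (LinearMap.mulLeft Aᵐᵒᵖ a) :=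
    SetLike.ext fun x => (hAB x).trans (mem_twoSidedIdealSpan_iff_mem_iSup_map_mulLeft B)
  have hX : IsInjectiveWrt Aᵐᵒᵖ X ↥AB := hAB' ▸ IsInjectiveWrt.iSup fun a => hB.map _
  exact ⟨hX, fun ⟨C, hCAB, hC⟩ => hX.injective_of_rightAnnihilator_eq_bot C hCAB hC⟩
end

section
/- Let A be a ring and X a right A-module with X ≠ G(X). Then there exists a non-zero right ideal B of A such that the module B_A is isomorphic to a submodule of X. -/
/-!
Since `G(X) ≠ X`, some proper submodule `Y` has `X/Y` non-singular. For `x ∉ Y` the right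
annihilator of `x + Y` is not essential, so it misses some non-zero right ideal `C`. The right
annihilator of `x` lies inside that of `x + Y`, so `c ↦ x c` is injective on `C`.
-/

open MulOpposite

section RightModule

variable (A : Type*) [Ring A] {X : Type*} [AddCommGroup X] [Module Aᵐᵒᵖ X]

def orbitMap (x : X) : A →ₗ[Aᵐᵒᵖ] X where
  toFun a := op a • x
  map_add' a b := by rw [op_add, add_smul]
  map_smul' c a := by
    change op (a * c.unop) • x = c • op a • x
    rw [op_mul, op_unop, mul_smul]

theorem ker_orbitMap (x : X) : LinearMap.ker (orbitMap A x) = rightAnn A x := rfl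

variable {A}

theorem rightAnn_le_rightAnn_map {Z : Type*} [AddCommGroup Z] [Module Aᵐᵒᵖ Z]
    (f : X →ₗ[Aᵐᵒᵖ] Z) (x : X) : rightAnn A x ≤ rightAnn A (f x) := fun a (ha : op a • x = 0) =>
  show op a • f x = 0 by rw [← f.map_smul, ha, f.map_zero]

theorem IsNonsingularMod.exists_disjoint_rightAnn (hX : IsNonsingularMod A X) {x : X}
    (hx : x ≠ 0) : ∃ C : Submodule Aᵐᵒᵖ A, C ≠ ⊥ ∧ Disjoint C (rightAnn A x) := by
  have hness : ¬ IsEssentialRightIdeal A (rightAnn A x) := fun h => hx (hX x h)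
  simp only [IsEssentialRightIdeal, not_forall, not_not] at hness
  obtain ⟨C, hC, hinf⟩ := hness
  exact ⟨C, hC, disjoint_iff.mpr (inf_comm C _ ▸ hinf)⟩

variable (A X)

theorem exists_isNonsingularMod_quotient_of_goldieRadical_ne_top
    (hX : goldieRadical A X ≠ ⊤) : ∃ Y : Submodule Aᵐᵒᵖ X, IsNonsingularMod A (X ⧸ Y) ∧ Y ≠ ⊤ := by
  by_contra! h
  exact hX (sInf_eq_top.mpr h)

end RightModule

/-- If `X ≠ G(X)`, then some non-zero right ideal `B` of `A` is isomorphic to a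
submodule of `X` (i.e. embeds in `X`). -/
theorem stmt1 (A : Type u) [Ring A] (X : Type v) [AddCommGroup X] [Module Aᵐᵒᵖ X]
    (hX : goldieRadical A X ≠ ⊤) :
    ∃ B : Submodule Aᵐᵒᵖ A, B ≠ ⊥ ∧ ∃ f : B →ₗ[Aᵐᵒᵖ] X, Function.Injective f := by
  obtain ⟨Y, hY, hYtop⟩ := exists_isNonsingularMod_quotient_of_goldieRadical_ne_top A X hX
  obtain ⟨x, -, hxY⟩ := SetLike.exists_of_lt hYtop.lt_top
  have hx : Y.mkQ x ≠ 0 := by simpa [Submodule.Quotient.mk_eq_zero] using hxY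
  obtain ⟨C, hC, hdisj⟩ := hY.exists_disjoint_rightAnn hx
  refine ⟨C, hC, (orbitMap A x).domRestrict C, ?_⟩
  rw [LinearMap.injective_domRestrict_iff, ker_orbitMap]
  exact hdisj.mono_right (rightAnn_le_rightAnn_map Y.mkQ x)
end

section
/- Let A be a ring, X and Y right A-modules, {Y_i}_{i∈I} a family of right A-modules such that X is injective with respect to Y_i for each i ∈ I, and {f_i : Y_i → Y}_{i∈I} a family of homomorphisms. Then X is injective with respect to the submodule Σ_{i∈I} f_i(Y_i) of Y. Moreover, if there exists a monomorphism A_A → Σ_{i∈I} f_i(Y_i), then the module X is injective. -/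
open MulOpposite

open MulOpposite

/-! A maximal partial extension (Zorn) of a map to `X` from a submodule of `N` has a domain that
absorbs every submodule `P` for which `X` is `P`-injective: extend its restriction to `P` and
glue. Each `fᵢ(Yᵢ)`, a quotient of `Yᵢ`, is such a `P`, so the domain is all of `Σ fᵢ(Yᵢ)`. If
`A_A` embeds there, `X` is `A_A`-injective, which is Baer's criterion. -/

variable {R : Type*} [Ring R] {X : Type*} [AddCommGroup X] [Module R X]
  {M N : Type*} [AddCommGroup M] [Module R M] [AddCommGroup N] [Module R N]

namespace IsInjectiveWrt

theorem of_injective_s2 (hN : IsInjectiveWrt R X N) (e : M →ₗ[R] N) (he : Function.Injective e) :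
    IsInjectiveWrt R X M := by
  intro M₁ f
  let eM₁ := Submodule.equivMapOfInjective e he M₁
  obtain ⟨g, hg⟩ := hN (M₁.map e) (f ∘ₗ eM₁.symm.toLinearMap)
  exact ⟨g ∘ₗ e, fun m => (hg (eM₁ m)).trans (by simp)⟩

theorem of_surjective_s2 (hM : IsInjectiveWrt R X M) (e : M →ₗ[R] N) (he : Function.Surjective e) :
    IsInjectiveWrt R X N := by
  intro N₁ f
  obtain ⟨g, hg⟩ := hM (N₁.comap e) (f ∘ₗ e.restrict fun _ hm => hm)
  have hker : LinearMap.ker e ≤ LinearMap.ker g := fun m hm => by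
    have hm' : m ∈ N₁.comap e := by simp_all
    have hzero : e.restrict (fun _ hm => hm) ⟨m, hm'⟩ = (0 : N₁) := Subtype.ext hm
    simp [LinearMap.mem_ker, hg ⟨m, hm'⟩, hzero]
  let h := (LinearMap.ker e).liftQ g hker ∘ₗ (e.quotKerEquivOfSurjective he).symm.toLinearMap
  have hh : ∀ m, h (e m) = g m := fun m => by
    simp [h, (LinearEquiv.symm_apply_eq _).2 (e.quotKerEquivOfSurjective_apply_mk he m).symm]
  refine ⟨h, fun ⟨y, hy⟩ => ?_⟩
  obtain ⟨m, rfl⟩ := he y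
  rw [hh, hg ⟨m, hy⟩]
  rfl

theorem le_extensionOfMax_domain (i : M →ₗ[R] N) [Fact (Function.Injective i)] (f : M →ₗ[R] X)
    {P : Submodule R N} (hP : IsInjectiveWrt R X P) :
    P ≤ (Module.Baer.extensionOfMax i f).domain := by
  set E := Module.Baer.extensionOfMax i f
  let S : Submodule R P := E.domain.comap P.subtype
  obtain ⟨g, hg⟩ := hP S (E.toFun ∘ₗ (P.subtype ∘ₗ S.subtype).codRestrict E.domain fun s => s.2)
  let G : N →ₗ.[R] X := ⟨P, g⟩
  have hcompat : ∀ (x : E.domain) (y : G.domain), (x : N) = y → E.toLinearPMap x = G y :=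
    fun x y hxy => by
      have hy : y ∈ S := by simp [S, ← hxy]
      exact ((hg ⟨y, hy⟩).trans (congrArg E.toFun (Subtype.ext hxy.symm))).symm
  have hle : E.toLinearPMap ≤ E.toLinearPMap.sup G hcompat := E.toLinearPMap.left_le_sup G hcompat
  let E' : Module.Baer.ExtensionOf i f :=
    { toLinearPMap := E.toLinearPMap.sup G hcompat
      le := E.le.trans hle.1
      is_extension := fun m => (E.is_extension m).trans (hle.2 rfl) }
  have hmax : E' = E := Module.Baer.extensionOfMax_is_max i f E' hle
  calc P ≤ E.domain ⊔ P := le_sup_right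
    _ = E.domain := congrArg (fun F : Module.Baer.ExtensionOf i f => F.domain) hmax

theorem of_iSup_eq_top_s2 {ι : Type*} {P : ι → Submodule R N} (hP : ∀ j, IsInjectiveWrt R X (P j))
    (hsup : ⨆ j, P j = ⊤) : IsInjectiveWrt R X N := by
  intro N₁ f
  have : Fact (Function.Injective N₁.subtype) := ⟨N₁.injective_subtype⟩
  set E := Module.Baer.extensionOfMax N₁.subtype f
  have hdom : E.domain = ⊤ :=
    eq_top_iff.2 (hsup ▸ iSup_le fun j => le_extensionOfMax_domain N₁.subtype f (hP j))
  exact ⟨E.toFun ∘ₗ (LinearEquiv.ofTop _ hdom).symm.toLinearMap, fun y => (E.is_extension y).symm⟩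

theorem iSup_s2 {Y : Type*} [AddCommGroup Y] [Module R Y] {ι : Type*} {P : ι → Submodule R Y}
    (hP : ∀ j, IsInjectiveWrt R X (P j)) : IsInjectiveWrt R X ↥(⨆ j, P j) := by
  let incl j : P j →ₗ[R] ↥(⨆ j, P j) := Submodule.inclusion (le_iSup P j)
  refine of_iSup_eq_top_s2 (P := fun j => LinearMap.range (incl j))
    (fun j => (hP j).of_surjective_s2 _ (incl j).surjective_rangeRestrict) ?_
  apply Submodule.map_injective_of_injective (⨆ j, P j).injective_subtype
  simp only [Submodule.map_iSup, ← LinearMap.range_comp, incl, Submodule.subtype_comp_inclusion,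
    Submodule.range_subtype, Submodule.map_subtype_top]

theorem baer (h : IsInjectiveWrt R X R) : Module.Baer R X :=
  fun I g => (h I g).imp fun _ hg x hx => hg ⟨x, hx⟩

end IsInjectiveWrt

/-- If `X` is injective with respect to each module `Y i` and `f i : Y i →ₗ Y`
is a family of homomorphisms, then `X` is injective with respect to the submodule
`Σᵢ fᵢ(Yᵢ)` of `Y`; moreover, if `A_A` embeds into `Σᵢ fᵢ(Yᵢ)`, then `X` is injective. -/
theorem stmt2 (A : Type u) [Ring A] (X : Type v) [AddCommGroup X] [Module Aᵐᵒᵖ X]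
    (Y : Type w) [AddCommGroup Y] [Module Aᵐᵒᵖ Y]
    {I : Type z} (Yi : I → Type w') [∀ i, AddCommGroup (Yi i)] [∀ i, Module Aᵐᵒᵖ (Yi i)]
    (hX : ∀ i, IsInjectiveWrt Aᵐᵒᵖ X (Yi i))
    (f : ∀ i, Yi i →ₗ[Aᵐᵒᵖ] Y) :
    IsInjectiveWrt Aᵐᵒᵖ X ↥(⨆ i, LinearMap.range (f i)) ∧
      ((∃ g : A →ₗ[Aᵐᵒᵖ] ↥(⨆ i, LinearMap.range (f i)), Function.Injective g) →
        Module.Injective Aᵐᵒᵖ X) := by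
  have hsum : IsInjectiveWrt Aᵐᵒᵖ X ↥(⨆ i, LinearMap.range (f i)) :=
    IsInjectiveWrt.iSup_s2 fun i => (hX i).of_surjective_s2 _ (f i).surjective_rangeRestrict
  refine ⟨hsum, fun ⟨g, hg⟩ => Module.Baer.injective (IsInjectiveWrt.baer ?_)⟩
  exact (hsum.of_injective_s2 g hg).of_injective_s2 (MulOpposite.opLinearEquiv Aᵐᵒᵖ).symm.toLinearMap
    (MulOpposite.opLinearEquiv Aᵐᵒᵖ).symm.injective
end

section
/- Let A be a ring, X a non-singular non-zero right A-module, and {C_i : i ∈ I} the set of all non-zero right ideals of A such that no non-zero submodule of the A-module C_i is isomorphic to a submodule of X. Set C = Σ_{i∈I} C_i. Then for any submodule C' of the module C_A, every homomorphism f : C'_A → X is the zero homomorphism. -/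
open MulOpposite

open MulOpposite

/-
A homomorphism `f` from a right `A`-module into a non-singular module `X` that is non-zero
at `x` is injective on `x B`, where `B` is a non-zero right ideal meeting the non-essential right
ideal `r(f x)` trivially. Hence every right ideal `C_i` of the family is "`X`-torsion": all
homomorphisms from its submodules to `X` vanish. This class of submodules is closed under
finite sums (a homomorphism vanishing on `D ∩ N` factors through `(D + N)/N`) and therefore,
since every element of a sum lies in a finite subsum, under arbitrary sums.
-/

section HomsVanish

variable {R M : Type*} [Ring R] [AddCommGroup M] [Module R M]
  (X : Type*) [AddCommGroup X] [Module R X]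

def Submodule.HomsVanish (N : Submodule R M) : Prop :=
  ∀ D : Submodule R M, D ≤ N → ∀ g : D →ₗ[R] X, g = 0

namespace Submodule

variable {X}

theorem HomsVanish.apply_eq_zero {N : Submodule R M} (hN : N.HomsVanish X)
    {D : Submodule R M} (g : D →ₗ[R] X) {x : D} (hx : (x : M) ∈ N) : g x = 0 :=
  LinearMap.congr_fun (hN (D ⊓ N) inf_le_right (g ∘ₗ inclusion inf_le_left)) ⟨x, x.2, hx⟩

theorem homsVanish_bot : (⊥ : Submodule R M).HomsVanish X := by
  intro D hD g
  ext ⟨x, hx⟩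
  obtain rfl : x = 0 := (mem_bot R).1 (hD hx)
  exact g.map_zero

theorem exists_extend_sup_of_forall_mem_eq_zero {D N : Submodule R M} (g : D →ₗ[R] X)
    (hg : ∀ x : D, (x : M) ∈ N → g x = 0) :
    ∃ g' : ↥(D ⊔ N) →ₗ[R] X, (∀ x : D, g' (inclusion le_sup_left x) = g x) ∧
      ∀ y : ↥(D ⊔ N), (y : M) ∈ N → g' y = 0 := by
  have hker : comap D.subtype D ⊓ comap D.subtype N ≤ LinearMap.ker g :=
    fun x hx => hg x hx.2
  refine ⟨(comap D.subtype D ⊓ comap D.subtype N).liftQ g hker ∘ₗ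
      (LinearMap.quotientInfEquivSupQuotient D N).symm.toLinearMap ∘ₗ
      (comap (D ⊔ N).subtype N).mkQ, fun x => ?_, fun y hy => ?_⟩
  · simp only [LinearMap.coe_comp, LinearEquiv.coe_coe, Function.comp_apply, mkQ_apply]
    rw [← LinearMap.quotientInfEquivSupQuotient_apply_mk, LinearEquiv.symm_apply_apply,
      liftQ_apply]
  · simp [(Quotient.mk_eq_zero _).2 (show y ∈ comap (D ⊔ N).subtype N from hy)]

theorem HomsVanish.sup {N₁ N₂ : Submodule R M} (h₁ : N₁.HomsVanish X) (h₂ : N₂.HomsVanish X) :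
    (N₁ ⊔ N₂).HomsVanish X := by
  intro D hD g
  obtain ⟨g', hg'D, hg'N₁⟩ :=
    exists_extend_sup_of_forall_mem_eq_zero g fun _ hx => h₁.apply_eq_zero g hx
  ext ⟨_, hx⟩
  obtain ⟨m, hm, n, hn, rfl⟩ := mem_sup.1 (hD hx)
  have hn' : n ∈ D ⊔ N₁ := by
    simpa using sub_mem (mem_sup_left hx) (mem_sup_right hm : m ∈ D ⊔ N₁)
  have hsplit : inclusion le_sup_left ⟨m + n, hx⟩ =
      (⟨m, mem_sup_right hm⟩ + ⟨n, hn'⟩ : ↥(D ⊔ N₁)) := rfl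
  rw [LinearMap.zero_apply, ← hg'D, hsplit, map_add, hg'N₁ _ hm, h₂.apply_eq_zero g' hn,
    add_zero]

theorem homsVanish_sSup {S : Set (Submodule R M)} (hS : ∀ N ∈ S, N.HomsVanish X) :
    (sSup S).HomsVanish X := by
  intro D hD g
  ext x
  obtain ⟨s, hsS, hx⟩ := mem_sSup_iff_exists_finset.1 (hD x.2)
  have hs : (s.sup id).HomsVanish X :=
    Finset.sup_induction homsVanish_bot (fun _ h₁ _ h₂ => h₁.sup h₂) fun N hN => hS N (hsS hN)
  exact hs.apply_eq_zero g (by simpa [Finset.sup_eq_iSup] using hx)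

end Submodule

end HomsVanish

section Nonsingular

open Submodule

variable {A : Type*} [Ring A] {M X : Type*} [AddCommGroup M] [Module Aᵐᵒᵖ M]
  [AddCommGroup X] [Module Aᵐᵒᵖ X]

theorem mem_rightAnn {x : X} {a : A} : a ∈ rightAnn A x ↔ op a • x = 0 :=
  Iff.rfl

theorem IsNonsingularMod.exists_ne_bot_injective (hX : IsNonsingularMod A X)
    {g : M →ₗ[Aᵐᵒᵖ] X} (hg : g ≠ 0) :
    ∃ E : Submodule Aᵐᵒᵖ M, E ≠ ⊥ ∧ Function.Injective (g ∘ₗ E.subtype) := by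
  obtain ⟨x, hx⟩ : ∃ x, g x ≠ 0 := by
    by_contra! h
    exact hg (LinearMap.ext h)
  obtain ⟨B, hB, hBann⟩ : ∃ B, B ≠ ⊥ ∧ rightAnn A (g x) ⊓ B = ⊥ := by
    simpa [IsEssentialRightIdeal] using mt (hX (g x)) hx
  let ψ : A →ₗ[Aᵐᵒᵖ] M :=
    LinearMap.toSpanSingleton Aᵐᵒᵖ M x ∘ₗ (opLinearEquiv Aᵐᵒᵖ).toLinearMap
  have hψ : ∀ b ∈ B, g (ψ b) = 0 → b = 0 := fun b hb h0 => by
    have : b ∈ rightAnn A (g x) ⊓ B := ⟨mem_rightAnn.2 (by simpa [ψ] using h0), hb⟩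
    rwa [hBann] at this
  refine ⟨B.map ψ, ?_, (injective_iff_map_eq_zero _).2 ?_⟩
  · obtain ⟨b, hb, hb0⟩ := (Submodule.ne_bot_iff B).1 hB
    refine (Submodule.ne_bot_iff _).2 ⟨ψ b, mem_map_of_mem hb, fun h => hb0 (hψ b hb ?_)⟩
    rw [h, map_zero]
  · rintro ⟨_, b, hb, rfl⟩ h0
    ext
    simp [hψ b hb h0]

theorem homsVanish_of_forall_not_injective (hX : IsNonsingularMod A X) {N : Submodule Aᵐᵒᵖ M}
    (hN : ∀ D : Submodule Aᵐᵒᵖ M, D ≤ N → D ≠ ⊥ → ¬∃ f : D →ₗ[Aᵐᵒᵖ] X, Function.Injective f) :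
    N.HomsVanish X := by
  intro D hD g
  by_contra hg
  obtain ⟨E, hE, hinj⟩ := hX.exists_ne_bot_injective hg
  have hE' : E.map D.subtype ≠ ⊥ := fun h =>
    hE (map_injective_of_injective D.injective_subtype (h.trans (Submodule.map_bot _).symm))
  let e := equivMapOfInjective D.subtype D.injective_subtype E
  exact hN (E.map D.subtype) ((map_subtype_le D E).trans hD) hE'
    ⟨g ∘ₗ E.subtype ∘ₗ e.symm.toLinearMap, hinj.comp e.symm.injective⟩

end Nonsingular

theorem stmt4_general (A : Type u) [Ring A] (X : Type v) [AddCommGroup X] [Module Aᵐᵒᵖ X]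
    (hX : IsNonsingularMod A X)
    (C : Submodule Aᵐᵒᵖ A)
    (hC : C = sSup {Ci : Submodule Aᵐᵒᵖ A | Ci ≠ ⊥ ∧
      ∀ D : Submodule Aᵐᵒᵖ A, D ≤ Ci → D ≠ ⊥ →
        ¬∃ f : D →ₗ[Aᵐᵒᵖ] X, Function.Injective f}) :
    ∀ C' : Submodule Aᵐᵒᵖ A, C' ≤ C → ∀ f : C' →ₗ[Aᵐᵒᵖ] X, f = 0 := by
  subst hC
  exact Submodule.homsVanish_sSup fun Ci hCi => homsVanish_of_forall_not_injective hX hCi.2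

/-- Let `X` be a non-singular non-zero right `A`-module and let `C` be the sum of
all non-zero right ideals of `A` having no non-zero submodule isomorphic to a submodule of `X`.
Then every homomorphism from a submodule of `C_A` to `X` is zero. -/
theorem stmt4 (A : Type u) [Ring A] (X : Type v) [AddCommGroup X] [Module Aᵐᵒᵖ X]
    [Nontrivial X] (hX : IsNonsingularMod A X)
    (C : Submodule Aᵐᵒᵖ A)
    (hC : C = sSup {Ci : Submodule Aᵐᵒᵖ A | Ci ≠ ⊥ ∧
      ∀ D : Submodule Aᵐᵒᵖ A, D ≤ Ci → D ≠ ⊥ →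
        ¬∃ f : D →ₗ[Aᵐᵒᵖ] X, Function.Injective f}) :
    ∀ C' : Submodule Aᵐᵒᵖ A, C' ≤ C → ∀ f : C' →ₗ[Aᵐᵒᵖ] X, f = 0 :=
  stmt4_general A X hX C hC
end

section
/- Let A be a ring, X a quasi-injective non-singular non-zero right A-module, {C_i : i ∈ I} the set of all non-zero right ideals of A such that no non-zero submodule of the A-module C_i is isomorphic to a submodule of X, and {D_j : j ∈ J} the set of all non-zero right ideals of A that are isomorphic to a submodule of X. Set C = Σ_{i∈I} C_i, D = Σ_{j∈J} D_j, and B = C + D. Then X is injective with respect to the essential right ideal B. -/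
open MulOpposite

open MulOpposite

/-!
Say that partial homomorphisms into `X` extend over a submodule `W` of `Y` if each of them has an
extension whose domain contains `W`. By Zorn's lemma on partial homomorphisms this property passes
to arbitrary sums of submodules, and it makes `X` injective with respect to `W`. It holds for each
`Dⱼ`, since the quasi-injective `X` is injective with respect to every module embedding into `X`.
It holds for each `Cᵢ` because every homomorphism `g` from a submodule of `Cᵢ` to `X` vanishes, so
partial homomorphisms extend by zero: `g` is injective on no non-zero cyclic submodule, hence has
essential kernel, hence takes values in `Sing X = 0`.
-/

section

variable {R : Type*} [Ring R] {X Y : Type*} [AddCommGroup X] [Module R X]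
  [AddCommGroup Y] [Module R Y]

theorem IsInjectiveWrt.of_injective_s7 (h : IsInjectiveWrt R X Y) {E : Type*} [AddCommGroup E]
    [Module R E] (ι : E →ₗ[R] Y) (hι : Function.Injective ι) : IsInjectiveWrt R X E := by
  intro E₁ f
  let e := Submodule.equivMapOfInjective ι hι E₁
  obtain ⟨G, hG⟩ := h (E₁.map ι) (f ∘ₗ e.symm)
  refine ⟨G ∘ₗ ι, fun y => ?_⟩
  simpa [e] using hG (e y)

variable (X) in
def PartialMapsExtendOver (W : Submodule R Y) : Prop :=
  ∀ f : Y →ₗ.[R] X, ∃ g : Y →ₗ.[R] X, f ≤ g ∧ W ≤ g.domain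

theorem PartialMapsExtendOver.of_compatible {W : Submodule R Y}
    (h : ∀ f : Y →ₗ.[R] X, ∃ k : W →ₗ[R] X,
      ∀ (x : f.domain) (w : W), (x : Y) = w → f x = k w) :
    PartialMapsExtendOver X W := fun f =>
  have ⟨k, hk⟩ := h f
  ⟨f.sup ⟨W, k⟩ hk, f.left_le_sup _ hk, le_sup_right⟩

theorem PartialMapsExtendOver.of_forall_eq_zero {W : Submodule R Y}
    (hW : ∀ M ≤ W, ∀ g : M →ₗ[R] X, g = 0) : PartialMapsExtendOver X W :=
  .of_compatible fun f => ⟨0, fun x w hxw => by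
    have hx : (x : Y) ∈ f.domain ⊓ W := ⟨x.2, hxw ▸ w.2⟩
    exact LinearMap.congr_fun
      (hW _ inf_le_right (f.toFun ∘ₗ Submodule.inclusion inf_le_left)) ⟨x, hx⟩⟩

theorem IsInjectiveWrt.partialMapsExtendOver {W : Submodule R Y}
    (h : IsInjectiveWrt R X W) : PartialMapsExtendOver X W :=
  .of_compatible fun f => by
    let W₁ : Submodule R W := f.domain.comap W.subtype
    obtain ⟨k, hk⟩ := h W₁
      (f.toFun ∘ₗ (W.subtype ∘ₗ W₁.subtype).codRestrict f.domain fun w => w.2)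
    refine ⟨k, fun x w hxw => ?_⟩
    have hw : w ∈ W₁ := show (w : Y) ∈ f.domain from hxw ▸ x.2
    rw [hk ⟨w, hw⟩]
    exact congrArg f (Subtype.ext hxw)

theorem PartialMapsExtendOver.sSup {Ws : Set (Submodule R Y)}
    (h : ∀ W ∈ Ws, PartialMapsExtendOver X W) : PartialMapsExtendOver X (sSup Ws) := by
  intro f
  obtain ⟨g, hfg, hmax⟩ := zorn_le_nonempty_Ici₀ f
    (fun c _ hc _ _ => ⟨LinearPMap.sSup c hc.directedOn, fun _ => LinearPMap.le_sSup _⟩) f le_rfl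
  refine ⟨g, hfg, sSup_le fun W hW => ?_⟩
  obtain ⟨g', hgg', hWg'⟩ := h W hW g
  exact hWg'.trans (hmax hgg').1

theorem PartialMapsExtendOver.isInjectiveWrt {B : Submodule R Y}
    (h : PartialMapsExtendOver X B) : IsInjectiveWrt R X B := by
  intro Y₁ f
  let e := Submodule.equivMapOfInjective B.subtype B.injective_subtype Y₁
  obtain ⟨g, hfg, hBg⟩ := h ⟨Y₁.map B.subtype, f ∘ₗ e.symm⟩
  refine ⟨g.toFun ∘ₗ Submodule.inclusion hBg, fun y => ?_⟩
  simpa [e] using (hfg.2 (x := e y) (y := Submodule.inclusion hBg y) rfl).symm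

theorem exists_smul_mem_ker_ne_zero {N : Submodule R Y}
    (hN : ∀ N' ≤ N, N' ≠ ⊥ → ¬∃ f : N' →ₗ[R] X, Function.Injective f)
    (g : N →ₗ[R] X) {x : N} (hx : x ≠ 0) : ∃ r : R, r • x ∈ LinearMap.ker g ∧ r • x ≠ 0 := by
  by_contra! hker
  have hxN : R ∙ (x : Y) ≤ N := (Submodule.span_singleton_le_iff_mem _ _).mpr x.2
  refine hN _ hxN ?_ ⟨g ∘ₗ Submodule.inclusion hxN, ?_⟩
  · simpa using hx
  · rw [injective_iff_map_eq_zero]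
    rintro ⟨y, hy⟩ hgy
    obtain ⟨r, rfl⟩ := Submodule.mem_span_singleton.mp hy
    exact Subtype.ext (show r • (x : Y) = 0 by simpa using congrArg Subtype.val (hker r hgy))

end

theorem IsNonsingularMod.eq_zero_of_forall_not_injective {A : Type*} [Ring A] {X Y : Type*}
    [AddCommGroup X] [Module Aᵐᵒᵖ X] [AddCommGroup Y] [Module Aᵐᵒᵖ Y]
    (hX : IsNonsingularMod A X) {N : Submodule Aᵐᵒᵖ Y}
    (hN : ∀ N' ≤ N, N' ≠ ⊥ → ¬∃ f : N' →ₗ[Aᵐᵒᵖ] X, Function.Injective f)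
    (g : N →ₗ[Aᵐᵒᵖ] X) : g = 0 := by
  ext m
  refine hX _ fun I hI => (Submodule.ne_bot_iff _).mpr ?_
  obtain ⟨b, hbI, hb0⟩ := (Submodule.ne_bot_iff I).mp hI
  by_cases hbm : op b • m = 0
  · exact ⟨b, ⟨show op b • g m = 0 by rw [← map_smul, hbm, map_zero], hbI⟩, hb0⟩
  obtain ⟨r, hker, hr0⟩ := exists_smul_mem_ker_ne_zero hN g hbm
  have hop : op (b * unop r) = r * op b := by simp
  refine ⟨b * unop r, ⟨?_, I.smul_mem r hbI⟩, fun h => hr0 ?_⟩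
  · show op (b * unop r) • g m = 0
    rwa [hop, mul_smul, ← map_smul, ← map_smul]
  · rw [← mul_smul, ← hop, h, op_zero, zero_smul]

theorem stmt7_general (A : Type u) [Ring A] (X : Type v) [AddCommGroup X] [Module Aᵐᵒᵖ X]
    (hX : IsNonsingularMod A X)
    (hquasi : IsInjectiveWrt Aᵐᵒᵖ X X)
    (C D B : Submodule Aᵐᵒᵖ A)
    (hC : C = sSup {Ci : Submodule Aᵐᵒᵖ A | Ci ≠ ⊥ ∧
      ∀ D' : Submodule Aᵐᵒᵖ A, D' ≤ Ci → D' ≠ ⊥ →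
        ¬∃ f : D' →ₗ[Aᵐᵒᵖ] X, Function.Injective f})
    (hD : D = sSup {Dj : Submodule Aᵐᵒᵖ A | Dj ≠ ⊥ ∧
      ∃ f : Dj →ₗ[Aᵐᵒᵖ] X, Function.Injective f})
    (hB : B = C ⊔ D) :
    IsInjectiveWrt Aᵐᵒᵖ X ↥B := by
  subst hB hC hD
  rw [← sSup_union]
  refine PartialMapsExtendOver.isInjectiveWrt (.sSup ?_)
  rintro W (⟨-, hW⟩ | ⟨-, ι, hι⟩)
  · exact .of_forall_eq_zero fun M hM g =>
      hX.eq_zero_of_forall_not_injective (fun N hN => hW N (hN.trans hM)) g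
  · exact (hquasi.of_injective_s7 ι hι).partialMapsExtendOver

/-- If moreover `X` is quasi-injective, then `X` is injective with respect to the
essential right ideal `B = C + D`. -/
theorem stmt7 (A : Type u) [Ring A] (X : Type v) [AddCommGroup X] [Module Aᵐᵒᵖ X]
    [Nontrivial X] (hX : IsNonsingularMod A X)
    (hquasi : IsInjectiveWrt Aᵐᵒᵖ X X)
    (C D B : Submodule Aᵐᵒᵖ A)
    (hC : C = sSup {Ci : Submodule Aᵐᵒᵖ A | Ci ≠ ⊥ ∧
      ∀ D' : Submodule Aᵐᵒᵖ A, D' ≤ Ci → D' ≠ ⊥ →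
        ¬∃ f : D' →ₗ[Aᵐᵒᵖ] X, Function.Injective f})
    (hD : D = sSup {Dj : Submodule Aᵐᵒᵖ A | Dj ≠ ⊥ ∧
      ∃ f : Dj →ₗ[Aᵐᵒᵖ] X, Function.Injective f})
    (hB : B = C ⊔ D) :
    IsInjectiveWrt Aᵐᵒᵖ X ↥B :=
  stmt7_general A X hX hquasi C D B hC hD hB
end

section
/- Let A be a ring, G = G(A_A) the Goldie radical of the module A_A (which is a two-sided ideal of A), and h : A → A/G the natural ring epimorphism. If B is an essential right ideal of A, then h(B) is an essential right ideal of the ring h(A) = A/G. -/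
open MulOpposite

open MulOpposite

/-!
If `h(B) ∩ C' = 0` with `0 ≠ h(c) ∈ C'`, then for every `a` in the essential right ideal
`(B : c) = {a | c a ∈ B}` the element `h(c a)` lies in `h(B) ∩ C'`, so `c a ∈ G`. Hence the right
annihilator of `c + G` in `A/G` contains `(B : c)` and is essential, and since `A/G(A)` is a
non-singular module this forces `c ∈ G`, i.e. `h(c) = 0`.
-/

section

variable {A : Type*} [Ring A]

theorem IsEssentialRightIdeal.mono {B B' : Submodule Aᵐᵒᵖ A} (hB : IsEssentialRightIdeal A B)
    (h : B ≤ B') : IsEssentialRightIdeal A B' :=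
  fun C hC hbot => hB C hC (le_bot_iff.mp (hbot ▸ inf_le_inf_right C h))

theorem IsEssentialRightIdeal.comap_mulLeft {B : Submodule Aᵐᵒᵖ A}
    (hB : IsEssentialRightIdeal A B) (c : A) :
    IsEssentialRightIdeal A (B.comap (LinearMap.mulLeft Aᵐᵒᵖ c)) := by
  intro C hC hbot
  set f := LinearMap.mulLeft Aᵐᵒᵖ c
  have hcC : C.map f = ⊥ := by
    by_contra hne
    refine hB _ hne ?_
    rw [inf_comm, Submodule.map_inf_eq_map_inf_comap, inf_comm, hbot, Submodule.map_bot]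
  have hC_le : C ≤ B.comap f :=
    (LinearMap.le_ker_iff_map.mpr hcC).trans (LinearMap.ker_le_comap f)
  exact hC (inf_eq_right.mpr hC_le ▸ hbot)

theorem TwoSidedIdeal.mk'_eq_zero_iff (G : TwoSidedIdeal A) (x : A) :
    RingCon.mk' G.ringCon x = 0 ↔ x ∈ G :=
  (RingCon.eq G.ringCon).trans ((G.rel_iff x 0).trans (by rw [sub_zero]))

end

section

variable {A X : Type*} [Ring A] [AddCommGroup X] [Module Aᵐᵒᵖ X]

theorem mem_rightAnn_mk_iff (Y : Submodule Aᵐᵒᵖ X) (x : X) (a : A) :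
    a ∈ rightAnn A (Submodule.Quotient.mk x : X ⧸ Y) ↔ op a • x ∈ Y := by
  change op a • Submodule.Quotient.mk x = 0 ↔ _
  rw [← Submodule.Quotient.mk_smul, Submodule.Quotient.mk_eq_zero]

theorem rightAnn_mk_mono {Y Z : Submodule Aᵐᵒᵖ X} (hYZ : Y ≤ Z) (x : X) :
    rightAnn A (Submodule.Quotient.mk x : X ⧸ Y) ≤ rightAnn A (Submodule.Quotient.mk x : X ⧸ Z) :=
  fun a ha => (mem_rightAnn_mk_iff Z x a).mpr (hYZ ((mem_rightAnn_mk_iff Y x a).mp ha))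

variable (A X) in
theorem isNonsingularMod_quotient_goldieRadical : IsNonsingularMod A (X ⧸ goldieRadical A X) := by
  intro x hx
  obtain ⟨x, rfl⟩ := Submodule.Quotient.mk_surjective _ x
  rw [Submodule.Quotient.mk_eq_zero, goldieRadical, Submodule.mem_sInf]
  intro Y hY
  rw [← Submodule.Quotient.mk_eq_zero Y]
  exact hY _ (hx.mono (rightAnn_mk_mono (sInf_le hY) x))

end

/-- If `G = G(A_A)` (a two-sided ideal), `h : A → A/G` the natural epimorphism,
and `B` an essential right ideal of `A`, then `h(B)` is an essential right ideal of `A/G`. -/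
theorem stmt9 (A : Type u) [Ring A] (G : TwoSidedIdeal A)
    (hG : ∀ x : A, x ∈ G ↔ x ∈ goldieRadical A A)
    (B : Submodule Aᵐᵒᵖ A) (hB : IsEssentialRightIdeal A B)
    (B' : Submodule (G.ringCon.Quotient)ᵐᵒᵖ G.ringCon.Quotient)
    (hB' : (B' : Set G.ringCon.Quotient) = (RingCon.mk' G.ringCon) '' (B : Set A)) :
    IsEssentialRightIdeal G.ringCon.Quotient B' := by
  set h := RingCon.mk' G.ringCon
  intro C' hC' hbot
  obtain ⟨c', hc'C', hc'⟩ := Submodule.exists_mem_ne_zero_of_ne_bot hC'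
  obtain ⟨c, rfl⟩ := RingCon.mk'_surjective _ c'
  have hcolon : ∀ a ∈ B.comap (LinearMap.mulLeft Aᵐᵒᵖ c), c * a ∈ goldieRadical A A := by
    intro a ha
    have hB'mem : h (c * a) ∈ B' := by
      rw [← SetLike.mem_coe, hB']
      exact ⟨c * a, ha, rfl⟩
    have hC'mem : h (c * a) ∈ C' := by
      rw [map_mul]
      exact C'.smul_mem (op (h a)) hc'C'
    have hinf : h (c * a) ∈ B' ⊓ C' := ⟨hB'mem, hC'mem⟩
    rwa [hbot, Submodule.mem_bot, TwoSidedIdeal.mk'_eq_zero_iff, hG] at hinf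
  have hsing :
      IsEssentialRightIdeal A (rightAnn A (Submodule.Quotient.mk c : A ⧸ goldieRadical A A)) :=
    (hB.comap_mulLeft c).mono fun a ha => (mem_rightAnn_mk_iff _ c a).mpr (hcolon a ha)
  apply hc'
  rw [TwoSidedIdeal.mk'_eq_zero_iff, hG, ← Submodule.Quotient.mk_eq_zero]
  exact isNonsingularMod_quotient_goldieRadical A A _ hsing
end

section
/- Every right strongly semiprime ring A is semiprime (has no non-zero nilpotent two-sided ideals) and right non-singular (Sing A_A = 0). -/
open MulOpposite

open MulOpposite

/-!
For any two-sided ideal `I`, the ideal `I + l(I)` is essential as a right ideal: a non-zero `c`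
either kills `I` from the left or has a non-zero multiple `c z ∈ I`. Strong semiprimeness gives
finitely many `k = z + l ∈ I + l(I)` with zero common right annihilator, and on `I` each `k` acts
by left multiplication as its component `z ∈ I`.

* For `I` itself this shows that `t ∈ I` with `I t = 0` vanishes, so a nilpotent ideal is zero
  by descending on the nilpotency index.
* For the singular ideal `I = Sing A` the components `z` have essential right annihilators, whose
  intersection `E` is essential; a non-zero singular `x` then has a non-zero multiple `x b ∈ E`,
  which is killed by every `k`.
-/

variable {A : Type*} [Ring A]

lemma mem_rightAnn_iff {x a : A} : a ∈ rightAnn A x ↔ x * a = 0 := by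
  change op a • x = 0 ↔ x * a = 0
  rw [op_smul_eq_mul]

lemma mul_mem_of_mem_rightIdeal {C : Submodule Aᵐᵒᵖ A} {c : A} (hc : c ∈ C) (a : A) :
    c * a ∈ C := by
  simpa only [op_smul_eq_mul] using C.smul_mem (op a) hc

namespace IsEssentialRightIdeal

lemma top : IsEssentialRightIdeal A ⊤ := fun C hC => by simpa using hC

lemma mono_s19 {B B' : Submodule Aᵐᵒᵖ A} (hB : IsEssentialRightIdeal A B) (h : B ≤ B') :
    IsEssentialRightIdeal A B' :=
  fun C hC hB'C => hB C hC (eq_bot_iff.2 ((inf_le_inf_right C h).trans hB'C.le))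

lemma inf {B B' : Submodule Aᵐᵒᵖ A} (hB : IsEssentialRightIdeal A B)
    (hB' : IsEssentialRightIdeal A B') : IsEssentialRightIdeal A (B ⊓ B') :=
  fun C hC => by
    rw [inf_assoc]
    exact hB _ (hB' C hC)

end IsEssentialRightIdeal

lemma isEssentialRightIdeal_iff {B : Submodule Aᵐᵒᵖ A} :
    IsEssentialRightIdeal A B ↔ ∀ c : A, c ≠ 0 → ∃ a, c * a ≠ 0 ∧ c * a ∈ B := by
  constructor
  · intro hB c hc
    have hC : Submodule.span Aᵐᵒᵖ {c} ≠ ⊥ := by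
      rwa [Ne, Submodule.span_singleton_eq_bot]
    obtain ⟨x, ⟨hxB, hxc⟩, hx0⟩ := (Submodule.ne_bot_iff _).1 (hB _ hC)
    obtain ⟨r, rfl⟩ := Submodule.mem_span_singleton.1 hxc
    refine ⟨r.unop, ?_, ?_⟩ <;> rwa [← op_smul_eq_mul, op_unop]
  · intro h C hC
    obtain ⟨c, hcC, hc0⟩ := (Submodule.ne_bot_iff _).1 hC
    obtain ⟨a, hca0, hcaB⟩ := h c hc0
    exact (Submodule.ne_bot_iff _).2 ⟨c * a, ⟨hcaB, mul_mem_of_mem_rightIdeal hcC a⟩, hca0⟩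

lemma isEssentialRightIdeal_rightAnn_mul {x : A} (hx : IsEssentialRightIdeal A (rightAnn A x))
    (y : A) : IsEssentialRightIdeal A (rightAnn A (x * y)) := by
  refine isEssentialRightIdeal_iff.2 fun c hc => ?_
  by_cases hyc : y * c = 0
  · exact ⟨1, by rwa [mul_one], mem_rightAnn_iff.2 (by rw [mul_one, mul_assoc, hyc, mul_zero])⟩
  · obtain ⟨a, hyca, hxyca⟩ := isEssentialRightIdeal_iff.1 hx _ hyc
    refine ⟨a, fun hca => hyca (by rw [mul_assoc, hca, mul_zero]), mem_rightAnn_iff.2 ?_⟩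
    simpa only [mul_assoc] using mem_rightAnn_iff.1 hxyca

variable (A) in
def singularIdeal : TwoSidedIdeal A :=
  TwoSidedIdeal.mk' {x : A | IsEssentialRightIdeal A (rightAnn A x)}
    (IsEssentialRightIdeal.top.mono_s19 fun a _ => mem_rightAnn_iff.2 (zero_mul a))
    (fun hx hy => (hx.inf hy).mono_s19 fun a ⟨hxa, hya⟩ => mem_rightAnn_iff.2 <| by
      rw [add_mul, mem_rightAnn_iff.1 hxa, mem_rightAnn_iff.1 hya, add_zero])
    (fun hx => hx.mono_s19 fun a ha => mem_rightAnn_iff.2 <| by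
      rw [neg_mul, mem_rightAnn_iff.1 ha, neg_zero])
    (fun hy => hy.mono_s19 fun a ha => mem_rightAnn_iff.2 <| by
      rw [mul_assoc, mem_rightAnn_iff.1 ha, mul_zero])
    (fun hx => isEssentialRightIdeal_rightAnn_mul hx _)

lemma mem_singularIdeal {x : A} :
    x ∈ singularIdeal A ↔ IsEssentialRightIdeal A (rightAnn A x) :=
  TwoSidedIdeal.mem_mk' _ _ _ _ _ _ x

namespace TwoSidedIdeal

def leftAnnihilator (I : TwoSidedIdeal A) : TwoSidedIdeal A :=
  TwoSidedIdeal.mk' {a : A | ∀ t ∈ I, a * t = 0}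
    (fun t _ => zero_mul t)
    (fun hx hy t ht => by rw [add_mul, hx t ht, hy t ht, add_zero])
    (fun hx t ht => by rw [neg_mul, hx t ht, neg_zero])
    (fun hy t ht => by rw [mul_assoc, hy t ht, mul_zero])
    (fun {_ y} hx t ht => by rw [mul_assoc, hx (y * t) (I.mul_mem_left y t ht)])

lemma mem_leftAnnihilator {I : TwoSidedIdeal A} {a : A} :
    a ∈ I.leftAnnihilator ↔ ∀ t ∈ I, a * t = 0 :=
  TwoSidedIdeal.mem_mk' _ _ _ _ _ _ a

lemma exists_ne_zero_mem_sup_leftAnnihilator (I : TwoSidedIdeal A) {C : Submodule Aᵐᵒᵖ A}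
    (hC : C ≠ ⊥) : ∃ x ∈ C, x ≠ 0 ∧ x ∈ I ⊔ I.leftAnnihilator := by
  obtain ⟨c, hcC, hc0⟩ := (Submodule.ne_bot_iff _).1 hC
  by_cases hcI : ∀ t ∈ I, c * t = 0
  · exact ⟨c, hcC, hc0, mem_sup_right (mem_leftAnnihilator.2 hcI)⟩
  · push Not at hcI
    obtain ⟨t, htI, hct⟩ := hcI
    exact ⟨c * t, mul_mem_of_mem_rightIdeal hcC t, hct, mem_sup_left (I.mul_mem_left c t htI)⟩

lemma eq_bot_of_forall_list_prod_eq_zero {I : TwoSidedIdeal A}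
    (hI : ∀ t ∈ I, (∀ z ∈ I, z * t = 0) → t = 0) {n : ℕ} (hn : 0 < n)
    (h : ∀ l : List A, l.length = n → (∀ x ∈ l, x ∈ I) → l.prod = 0) : I = ⊥ := by
  induction n, hn using Nat.le_induction with
  | base =>
    refine eq_bot_iff.2 fun t ht => (mem_bot A).2 ?_
    simpa using h [t] rfl (by simpa using ht)
  | succ n hn ih =>
    refine ih fun l hl hlI => hI _ ?_ fun z hz => ?_
    · obtain ⟨x, hx⟩ := List.exists_mem_of_length_pos (hl ▸ hn)
      simpa using I.listProd_mem l id ⟨x, hx, hlI x hx⟩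
    · simpa using h (z :: l) (by simp [hl]) (by simpa using ⟨hz, hlI⟩)

end TwoSidedIdeal

namespace IsRightStronglySemiprime

open TwoSidedIdeal

lemma exists_finset_forall_mul_eq_mul (hA : IsRightStronglySemiprime A) (I : TwoSidedIdeal A) :
    ∃ K : Finset A, (∀ k ∈ K, ∃ z ∈ I, ∀ t ∈ I, k * t = z * t) ∧
      ∀ a : A, (∀ k ∈ K, k * a = 0) → a = 0 := by
  obtain ⟨K, hKI, hK⟩ := hA (I ⊔ I.leftAnnihilator)
    fun _ hC => I.exists_ne_zero_mem_sup_leftAnnihilator hC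
  refine ⟨K, fun k hk => ?_, hK⟩
  obtain ⟨z, hz, l, hl, rfl⟩ := mem_sup.1 (hKI hk)
  exact ⟨z, hz, fun t ht => by rw [add_mul, mem_leftAnnihilator.1 hl t ht, add_zero]⟩

lemma eq_zero_of_forall_mul_eq_zero (hA : IsRightStronglySemiprime A) {I : TwoSidedIdeal A}
    {t : A} (ht : t ∈ I) (hIt : ∀ z ∈ I, z * t = 0) : t = 0 := by
  obtain ⟨K, hKI, hK⟩ := hA.exists_finset_forall_mul_eq_mul I
  refine hK t fun k hk => ?_
  obtain ⟨z, hz, hkz⟩ := hKI k hk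
  rw [hkz t ht, hIt z hz]

lemma isNonsingularMod (hA : IsRightStronglySemiprime A) : IsNonsingularMod A A := by
  intro x hx
  by_contra hx0
  obtain ⟨K, hKZ, hK⟩ := hA.exists_finset_forall_mul_eq_mul (singularIdeal A)
  choose! z hzZ hkz using hKZ
  have hE : IsEssentialRightIdeal A (K.inf fun k => rightAnn A (z k)) :=
    Finset.inf_induction IsEssentialRightIdeal.top (fun _ hE _ hB => hE.inf hB)
      fun k hk => mem_singularIdeal.1 (hzZ k hk)
  obtain ⟨b, hxb, hxbE⟩ := isEssentialRightIdeal_iff.1 hE x hx0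
  have hxbZ : x * b ∈ singularIdeal A :=
    (singularIdeal A).mul_mem_right x b (mem_singularIdeal.2 hx)
  refine hxb (hK _ fun k hk => ?_)
  rw [hkz k hk _ hxbZ, ← mem_rightAnn_iff]
  exact Finset.inf_le (f := fun k => rightAnn A (z k)) hk hxbE

end IsRightStronglySemiprime

/-- every right strongly semiprime ring is semiprime (no non-zero nilpotent
two-sided ideals) and right non-singular. -/
theorem stmt19 (A : Type u) [Ring A] (hA : IsRightStronglySemiprime A) :
    (∀ (T : TwoSidedIdeal A) (n : ℕ), 0 < n →
        (∀ l : List A, l.length = n → (∀ x ∈ l, x ∈ T) → l.prod = 0) → T = ⊥) ∧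
      IsNonsingularMod A A :=
  ⟨fun _ _ hn hT => TwoSidedIdeal.eq_bot_of_forall_list_prod_eq_zero
      (fun _ ht => hA.eq_zero_of_forall_mul_eq_zero ht) hn hT,
    hA.isNonsingularMod⟩
end
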